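/- arXiv:2307.08080 — 8 statements merged into one kernel-verified Lean document; each statement's English description precedes it below -/
import Mathlib

section
/- Let U be a finite set and let U₁, …, Uₙ be subsets of U. Let A₁, …, Aₙ be real matrices indexed by U × U such that for each i, the support of Aᵢ is contained in Uᵢ × Uᵢ (i.e., Aᵢ(u,v) = 0 unless both u ∈ Uᵢ and v ∈ Uᵢ), and set A = A₁ + ⋯ + Aₙ. For every v ∈ U let T(v) = { i ∈ [n] : v ∈ Uᵢ }, and for every i ∈ [n] let mᵢ = max_{v ∈ Uᵢ} |T(v)|. Then A·Aᵀ ⪯ Σ_{i=1}^{n} mᵢ · Aᵢ·Aᵢᵀ in the Loewner order. -/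
/-!
With `yᵢ = Aᵢᵀ x`, the quadratic forms of the two sides at `x` are `‖∑ᵢ yᵢ‖²` and
`∑ᵢ mᵢ ‖yᵢ‖²`. Since `yᵢ` vanishes outside `Uᵢ`, only the indices `i ∈ T(u)` contribute at a
coordinate `u`, and Cauchy–Schwarz gives
`(∑_{i ∈ T(u)} yᵢ(u))² ≤ |T(u)| ∑_{i ∈ T(u)} yᵢ(u)² ≤ ∑ᵢ mᵢ yᵢ(u)²`.
-/

open Matrix Finset
open scoped MatrixOrder

theorem sq_sum_le_sum_mul_sq_of_support {ι R : Type*} [Fintype ι] [CommRing R] [LinearOrder R]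
    [IsStrictOrderedRing R] (s : Finset ι) (f w : ι → R) (hf : ∀ i, f i ≠ 0 → i ∈ s)
    (hw : ∀ i ∈ s, (#s : R) ≤ w i) :
    (∑ i, f i) ^ 2 ≤ ∑ i, w i * f i ^ 2 := by
  have hwf : ∀ i, w i * f i ^ 2 ≠ 0 → i ∈ s := fun i hi => hf i fun h => by simp [h] at hi
  rw [← Fintype.sum_subset hf, ← Fintype.sum_subset hwf]
  calc (∑ i ∈ s, f i) ^ 2 ≤ #s * ∑ i ∈ s, f i ^ 2 := sq_sum_le_card_mul_sum_sq
    _ = ∑ i ∈ s, #s * f i ^ 2 := mul_sum ..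
    _ ≤ ∑ i ∈ s, w i * f i ^ 2 := sum_le_sum fun i hi => by gcongr; exact hw i hi

theorem sum_dotProduct_sum_le_sum_mul_dotProduct {ι U R : Type*} [Fintype ι] [Fintype U]
    [DecidableEq U] [CommRing R] [LinearOrder R] [IsStrictOrderedRing R]
    (Us : ι → Finset U) (y : ι → U → R) (hy : ∀ i u, y i u ≠ 0 → u ∈ Us i)
    (c : ι → R) (hc : ∀ i, ∀ u ∈ Us i, (#{j | u ∈ Us j} : R) ≤ c i) :
    (∑ i, y i) ⬝ᵥ (∑ i, y i) ≤ ∑ i, c i * (y i ⬝ᵥ y i) := by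
  simp only [dotProduct, Finset.sum_apply, mul_sum, ← sq]
  rw [sum_comm]
  refine sum_le_sum fun u _ => sq_sum_le_sum_mul_sq_of_support {j | u ∈ Us j} _ _ ?_ ?_
  · intro i hi
    simpa using hy i u hi
  · intro i hi
    exact hc i u (by simpa using hi)

theorem dotProduct_mul_transpose_mulVec {m n R : Type*} [Fintype m] [Fintype n] [CommSemiring R]
    (B : Matrix m n R) (x : m → R) :
    x ⬝ᵥ ((B * Bᵀ) *ᵥ x) = (Bᵀ *ᵥ x) ⬝ᵥ (Bᵀ *ᵥ x) := by
  rw [← mulVec_mulVec, dotProduct_mulVec, ← mulVec_transpose]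

theorem mem_of_transpose_mulVec_apply_ne_zero {m n R : Type*} [Fintype m] [CommSemiring R]
    {S : Set n} (B : Matrix m n R) (hB : ∀ w v, B w v ≠ 0 → v ∈ S) (x : m → R) {v : n}
    (hv : (Bᵀ *ᵥ x) v ≠ 0) : v ∈ S := by
  obtain ⟨w, -, hw⟩ := exists_ne_zero_of_sum_ne_zero hv
  exact hB w v (left_ne_zero_of_mul hw)

theorem mul_transpose_sum_le_sum_smul {ι U W : Type*} [Fintype ι] [Fintype U] [Fintype W]
    [DecidableEq U] (Us : ι → Finset U) (A : ι → Matrix W U ℝ)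
    (hA : ∀ i w u, A i w u ≠ 0 → u ∈ Us i)
    (c : ι → ℝ) (hc : ∀ i, ∀ u ∈ Us i, (#{j | u ∈ Us j} : ℝ) ≤ c i) :
    (∑ i, A i) * (∑ i, A i)ᵀ ≤ ∑ i, c i • (A i * (A i)ᵀ) := by
  have hgram : ∀ B : Matrix W U ℝ, (B * Bᵀ).IsHermitian := fun B => by
    simpa using isHermitian_mul_conjTranspose_self B
  refine le_iff.mpr (.of_dotProduct_mulVec_nonneg ?_ fun x => ?_)
  · exact (isSelfAdjoint_sum _ fun i _ => (hgram (A i)).smul (.all (c i))).sub (hgram _)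
  rw [star_trivial, sub_mulVec, dotProduct_sub, sub_nonneg, sum_mulVec, dotProduct_sum,
    dotProduct_mul_transpose_mulVec, transpose_sum, sum_mulVec]
  simp only [smul_mulVec, dotProduct_smul, smul_eq_mul, dotProduct_mul_transpose_mulVec]
  exact sum_dotProduct_sum_le_sum_mul_dotProduct Us _
    (fun i u => mem_of_transpose_mulVec_apply_ne_zero _ (hA i) x) c hc

theorem stmt_3 (U : Type*) [Fintype U] [DecidableEq U] (n : ℕ)
    (Us : Fin n → Finset U) (A : Fin n → Matrix U U ℝ)
    (hsupp : ∀ i u v, A i u v ≠ 0 → u ∈ Us i ∧ v ∈ Us i)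
    (m : Fin n → ℕ)
    (hm : ∀ i, m i = (Us i).sup fun v =>
      (Finset.univ.filter fun j : Fin n => v ∈ Us j).card) :
    ((∑ i, (m i : ℝ) • (A i * (A i)ᵀ)) - (∑ i, A i) * (∑ i, A i)ᵀ).PosSemidef := by
  refine le_iff.mp (mul_transpose_sum_le_sum_smul Us A (fun i u v h => (hsupp i u v h).2) _ ?_)
  intro i u hu
  rw [hm i]
  exact_mod_cast le_sup (f := fun v => #{j | v ∈ Us j}) hu
end

section
/- Let A and B be real symmetric n×n matrices and let ε > 0 be a real constant. If A·(I − ε·A) ⪯ B·(I − ε·B) and both A ⪯ (1/(2ε))·I and B ⪯ (1/(2ε))·I, then A ⪯ B. -/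
/-! With `c = 1 / (2ε)`, completing the square gives `A (I - εA) = (4ε)⁻¹ I - ε (cI - A)²`, so
the hypothesis says `(cI - B)² ⪯ (cI - A)²`, where `cI - A` and `cI - B` are positive semidefinite.
For positive semidefinite `X, Y`, `Y² ⪯ X²` implies `Y ⪯ X`: on an eigenvector `v` of `X - Y`
with eigenvalue `μ`, the quadratic form of `X² - Y² = X (X - Y) + (X - Y) Y` equals
`μ (v*Xv + v*Yv)`, which forces `μ ≥ 0` unless `Xv = Yv = 0`, i.e. `μ = 0`. -/

open Matrix
open scoped ComplexOrder

namespace Matrix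

variable {n 𝕜 : Type*} [Fintype n] [DecidableEq n] [RCLike 𝕜]

theorem PosSemidef.sub_of_mul_self_sub_mul_self {X Y : Matrix n n 𝕜}
    (hX : X.PosSemidef) (hY : Y.PosSemidef) (h : (X * X - Y * Y).PosSemidef) :
    (X - Y).PosSemidef := by
  have hD : (X - Y).IsHermitian := hX.1.sub hY.1
  refine hD.posSemidef_iff_eigenvalues_nonneg.mpr fun i => ?_
  set v : n → 𝕜 := ⇑(hD.eigenvectorBasis i)
  set μ := hD.eigenvalues i
  have hDv : (X - Y) *ᵥ v = μ • v := hD.mulVec_eigenvectorBasis i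
  have hv : v ≠ 0 := fun h0 =>
    hD.eigenvectorBasis.orthonormal.ne_zero i (by ext j; exact congrFun h0 j)
  have key : star v ⬝ᵥ (X * X - Y * Y) *ᵥ v =
      μ • (star v ⬝ᵥ X *ᵥ v + star v ⬝ᵥ Y *ᵥ v) := by
    have hvD : star v ᵥ* (X - Y) = μ • star v := by
      rw [← hD.eq, ← star_mulVec, hDv, star_smul, star_trivial]
    rw [show X * X - Y * Y = X * (X - Y) + (X - Y) * Y by noncomm_ring, add_mulVec,
      dotProduct_add, ← mulVec_mulVec, ← mulVec_mulVec, hDv, dotProduct_mulVec (star v) (X - Y),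
      hvD, mulVec_smul, dotProduct_smul, smul_dotProduct, smul_add]
  by_contra! hμ
  have hsum : star v ⬝ᵥ X *ᵥ v + star v ⬝ᵥ Y *ᵥ v = 0 := by
    refine (smul_eq_zero.mp (le_antisymm ?_ (key ▸ h.dotProduct_mulVec_nonneg v))).resolve_left
      hμ.ne
    exact smul_nonpos_of_nonpos_of_nonneg hμ.le
      (add_nonneg (hX.dotProduct_mulVec_nonneg v) (hY.dotProduct_mulVec_nonneg v))
  obtain ⟨hXv, hYv⟩ := (add_eq_zero_iff_of_nonneg (hX.dotProduct_mulVec_nonneg v)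
    (hY.dotProduct_mulVec_nonneg v)).mp hsum
  have hμv : μ • v = 0 := by
    rw [← hDv, sub_mulVec, (hX.dotProduct_mulVec_zero_iff v).mp hXv,
      (hY.dotProduct_mulVec_zero_iff v).mp hYv, sub_zero]
  exact hv ((smul_eq_zero.mp hμv).resolve_left hμ.ne)

end Matrix

theorem smul_one_sub_mul_self_sub_smul_one_sub_mul_self {K R : Type*} [Field K] [Ring R]
    [Algebra K R] {c ε : K} (hcε : 2 * c * ε = 1) (a b : R) :
    (c • 1 - a) * (c • 1 - a) - (c • 1 - b) * (c • 1 - b) =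
      ε⁻¹ • (b * (1 - ε • b) - a * (1 - ε • a)) := by
  rw [← eq_inv_of_mul_eq_one_left hcε]
  simp only [sub_mul, mul_sub, smul_mul_assoc, mul_smul_comm, one_mul, mul_one]
  linear_combination (norm := module) hcε • (b * b - a * a)

theorem stmt_6_general (n : ℕ) (A B : Matrix (Fin n) (Fin n) ℝ)
    (ε : ℝ) (hε : 0 < ε)
    (h1 : (B * (1 - ε • B) - A * (1 - ε • A)).PosSemidef)
    (h2 : ((1 / (2 * ε)) • (1 : Matrix (Fin n) (Fin n) ℝ) - A).PosSemidef)
    (h3 : ((1 / (2 * ε)) • (1 : Matrix (Fin n) (Fin n) ℝ) - B).PosSemidef) :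
    (B - A).PosSemidef := by
  have hsq := h1.smul (inv_nonneg.mpr hε.le)
  rw [← smul_one_sub_mul_self_sub_smul_one_sub_mul_self (c := 1 / (2 * ε)) (by field_simp)]
    at hsq
  simpa only [sub_sub_sub_cancel_left] using h2.sub_of_mul_self_sub_mul_self h3 hsq

theorem stmt_6 (n : ℕ) (A B : Matrix (Fin n) (Fin n) ℝ) (hA : A.IsSymm) (hB : B.IsSymm)
    (ε : ℝ) (hε : 0 < ε)
    (h1 : (B * (1 - ε • B) - A * (1 - ε • A)).PosSemidef)
    (h2 : ((1 / (2 * ε)) • (1 : Matrix (Fin n) (Fin n) ℝ) - A).PosSemidef)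
    (h3 : ((1 / (2 * ε)) • (1 : Matrix (Fin n) (Fin n) ℝ) - B).PosSemidef) :
    (B - A).PosSemidef :=
  stmt_6_general n A B ε hε h1 h2 h3
end

section
/- Let x and y be vectors in ℝⁿ and let a, b, c be real numbers with a > 0, c ≥ 0, and a·b ≥ 2c. Then (a·y + b·x)·(a·y + b·x)ᵀ ⪰ 2·(a·b − c)·(x·yᵀ + y·xᵀ) in the Loewner order. -/
/-!
With `s = x ⬝ᵥ z` and `t = y ⬝ᵥ z`, the quadratic form of the matrix at `z` is
`(a t + b s)² - 4 (a b - c) s t = (a t - b s)² + 4 c s t`. The second expression is nonnegative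
when `s t ≥ 0`; when `s t < 0` the first one is, because `a b - c ≥ c ≥ 0`.
-/

open Matrix

variable {ι R : Type*} [CommRing R]

lemma dotProduct_vecMulVec_mulVec [Fintype ι] (u v z : ι → R) :
    z ⬝ᵥ vecMulVec u v *ᵥ z = (z ⬝ᵥ u) * (v ⬝ᵥ z) := by
  rw [vecMulVec_mulVec, op_smul_eq_smul, dotProduct_smul, smul_eq_mul, mul_comm]

lemma isSymm_vecMulVec_self (w : ι → R) : (vecMulVec w w).IsSymm :=
  transpose_vecMulVec w w

lemma isSymm_vecMulVec_add_vecMulVec (x y : ι → R) :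
    (vecMulVec x y + vecMulVec y x).IsSymm := by
  simp only [IsSymm, transpose_add, transpose_vecMulVec, add_comm]

lemma two_mul_sub_mul_add_le_sq [LinearOrder R] [IsStrictOrderedRing R] {a b c : R}
    (hc : 0 ≤ c) (hab : 2 * c ≤ a * b) (s t : R) :
    2 * (a * b - c) * (s * t + t * s) ≤ (a * t + b * s) ^ 2 := by
  rcases le_or_gt 0 (s * t) with hst | hst
  · nlinarith [sq_nonneg (a * t - b * s), mul_nonneg hc hst]
  · nlinarith [sq_nonneg (a * t + b * s)]

theorem posSemidef_vecMulVec_sub_smul [Fintype ι] [LinearOrder R] [IsStrictOrderedRing R]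
    [StarRing R] [TrivialStar R] (x y : ι → R) {a b c : R} (hc : 0 ≤ c) (hab : 2 * c ≤ a * b) :
    (vecMulVec (a • y + b • x) (a • y + b • x) -
      (2 * (a * b - c)) • (vecMulVec x y + vecMulVec y x)).PosSemidef := by
  refine posSemidef_iff_dotProduct_mulVec.mpr ⟨?_, fun z => ?_⟩
  · exact isHermitian_iff_isSymm.mpr
      ((isSymm_vecMulVec_self _).sub ((isSymm_vecMulVec_add_vecMulVec x y).smul _))
  · rw [star_trivial, sub_mulVec, smul_mulVec, add_mulVec, dotProduct_sub, dotProduct_smul,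
      dotProduct_add, dotProduct_vecMulVec_mulVec, dotProduct_vecMulVec_mulVec,
      dotProduct_vecMulVec_mulVec, smul_eq_mul, sub_nonneg]
    simp only [add_dotProduct, smul_dotProduct, smul_eq_mul, dotProduct_comm z]
    linear_combination two_mul_sub_mul_add_le_sq hc hab (x ⬝ᵥ z) (y ⬝ᵥ z)

theorem stmt_7_general (n : ℕ) (x y : Fin n → ℝ) (a b c : ℝ)
    (hc : 0 ≤ c) (hab : 2 * c ≤ a * b) :
    (Matrix.vecMulVec (a • y + b • x) (a • y + b • x) -
      (2 * (a * b - c)) • (Matrix.vecMulVec x y + Matrix.vecMulVec y x)).PosSemidef :=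
  posSemidef_vecMulVec_sub_smul x y hc hab

theorem stmt_7 (n : ℕ) (x y : Fin n → ℝ) (a b c : ℝ)
    (ha : 0 < a) (hc : 0 ≤ c) (hab : 2 * c ≤ a * b) :
    (Matrix.vecMulVec (a • y + b • x) (a • y + b • x) -
      (2 * (a * b - c)) • (Matrix.vecMulVec x y + Matrix.vecMulVec y x)).PosSemidef :=
  stmt_7_general n x y a b c hc hab
end

section
/- Let γ > 0 be a real number and let h ≥ 1 be an integer. Define a₀ = 0 and a_j = 1/(1 + 4γ(j−1)) for integers j ≥ 1. Let Adj be the adjacency matrix of the complete graph on h+1 vertices (the (h+1)×(h+1) matrix with 0 on the diagonal and 1 in every off-diagonal entry), and let M = −(h−1)·(a_{h−1} − a_h)·Adj + 4·γ·a_h²·Adj². Then every eigenvalue λ of M satisfies |λ| ≤ 4γh; that is, the spectral radius of M is at most 4γh. -/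
/-!
The adjacency matrix `A = J - 1` of the complete graph on `h + 1` vertices satisfies
`(A + 1)(A - h) = 0`. Since `M = f(A)` for `f = c₁ X + c₂ X²`, the polynomial
`(X - f(-1))(X - f(h))` annihilates `M`, so its only possible eigenvalues are `f(-1)` and `f(h)`.
For `h ≥ 2`, with `d = 1 + 4γ(h-1)` and `e = 1 + 4γ(h-2)` we get
`a_{h-1} - a_h = 4γ / (e d)`, hence `0 ≤ f(-1) ≤ 4γ + 4γ(h-1)` and
`f(h) = 4γh (1 - 4γ) / (e d²)` with `|1 - 4γ| ≤ d ≤ e d²`.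
-/

open Matrix Polynomial

namespace spectrum

variable {𝕜 A : Type*} [Field 𝕜] [Ring A] [Algebra 𝕜 A]

theorem subset_setOf_isRoot_of_aeval_eq_zero {a : A} {p : 𝕜[X]} (hp : aeval a p = 0) :
    spectrum 𝕜 a ⊆ {x | p.IsRoot x} := by
  nontriviality A
  intro x hx
  simpa [hp, spectrum.zero_eq] using spectrum.subset_polynomial_aeval a p ⟨x, hx, rfl⟩

theorem aeval_subset_pair_of_mul_sub_eq_zero {a : A} {α β : 𝕜}
    (ha : (a - algebraMap 𝕜 A α) * (a - algebraMap 𝕜 A β) = 0) (f : 𝕜[X]) :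
    spectrum 𝕜 (aeval a f) ⊆ {f.eval α, f.eval β} := by
  obtain ⟨g, hg⟩ : (X - C α) * (X - C β) ∣ (f - C (f.eval α)) * (f - C (f.eval β)) :=
    mul_dvd_mul X_sub_C_dvd_sub_C_eval X_sub_C_dvd_sub_C_eval
  refine (subset_setOf_isRoot_of_aeval_eq_zero
    (p := (X - C (f.eval α)) * (X - C (f.eval β))) ?_).trans fun x hx => ?_
  · rw [← aeval_comp, mul_comp, sub_comp, sub_comp, X_comp, C_comp, C_comp, hg, map_mul]
    simp [ha]
  · simpa [sub_eq_zero] using hx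

end spectrum

theorem SimpleGraph.adjMatrix_top_sub_algebraMap_mul_sub_algebraMap {n R : Type*} [Fintype n]
    [DecidableEq n] [CommRing R] :
    ((⊤ : SimpleGraph n).adjMatrix R - algebraMap R _ (-1)) *
      ((⊤ : SimpleGraph n).adjMatrix R - algebraMap R _ (Fintype.card n - 1)) = 0 := by
  set J : Matrix n n R := of fun _ _ => 1
  have hA : (⊤ : SimpleGraph n).adjMatrix R = J - 1 := by
    ext i j; by_cases hij : i = j <;> simp [J, hij, one_apply]
  have hJ : J * J = (Fintype.card n : R) • J := by
    ext i j; simp [J, mul_apply]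
  rw [hA, Algebra.algebraMap_eq_smul_one, Algebra.algebraMap_eq_smul_one]
  calc (J - 1 - (-1 : R) • 1) * (J - 1 - ((Fintype.card n : R) - 1) • 1)
      = J * J - (Fintype.card n : R) • J := by
        simp only [neg_smul, one_smul, sub_smul, sub_neg_eq_add, sub_add_cancel, mul_sub,
          Matrix.mul_smul, mul_one]
        abel
    _ = 0 := by rw [hJ, sub_self]

section Bounds

variable {γ x s t : ℝ}

theorem abs_eigenvalue_of_neg_one_le (hγ : 0 < γ) (hx : 2 ≤ x)
    (hs : s = 1 / (1 + 4 * γ * (x - 2))) (ht : t = 1 / (1 + 4 * γ * (x - 1))) :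
    |(x - 1) * (s - t) + 4 * γ * t ^ 2| ≤ 4 * γ * x := by
  generalize he : 1 + 4 * γ * (x - 2) = e at hs
  generalize hd : 1 + 4 * γ * (x - 1) = d at ht
  have he1 : 1 ≤ e := by rw [← he]; nlinarith
  have hd1 : 1 ≤ d := by rw [← hd]; nlinarith
  have hx1 : 0 ≤ x - 1 := by linarith
  have hst : s - t = 4 * γ / (e * d) := by
    rw [hs, ht, div_sub_div _ _ (by positivity) (by positivity), ← hd, ← he]; ring_nf
  have ht1 : t ^ 2 ≤ 1 := by
    rw [ht]; exact pow_le_one₀ (by positivity) (div_le_one_of_le₀ hd1 (by positivity))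
  have hst1 : 4 * γ / (e * d) ≤ 4 * γ :=
    div_le_self (by positivity) (one_le_mul_of_one_le_of_one_le he1 hd1)
  rw [hst, abs_of_nonneg (by positivity)]
  calc (x - 1) * (4 * γ / (e * d)) + 4 * γ * t ^ 2 ≤ (x - 1) * (4 * γ) + 4 * γ * 1 := by
        gcongr
    _ = 4 * γ * x := by ring

theorem abs_eigenvalue_of_degree_le (hγ : 0 < γ) (hx : 2 ≤ x)
    (hs : s = 1 / (1 + 4 * γ * (x - 2))) (ht : t = 1 / (1 + 4 * γ * (x - 1))) :
    |x * (4 * γ * x * t ^ 2 - (x - 1) * (s - t))| ≤ 4 * γ * x := by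
  generalize he : 1 + 4 * γ * (x - 2) = e at hs
  generalize hd : 1 + 4 * γ * (x - 1) = d at ht
  have he1 : 1 ≤ e := by rw [← he]; nlinarith
  have hd1 : 1 + 4 * γ ≤ d := by rw [← hd]; nlinarith
  have hd0 : 0 < d := by linarith
  have he0 : 0 < e := by linarith
  have hx0 : 0 < x := by linarith
  have key : x * (4 * γ * x * t ^ 2 - (x - 1) * (s - t))
      = 4 * γ * x * ((1 - 4 * γ) / (e * d ^ 2)) := by
    rw [hs, ht]; field_simp; rw [← hd, ← he]; ring
  have hed : d ≤ e * d ^ 2 := by nlinarith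
  rw [key, abs_mul, abs_of_pos (show 0 < 4 * γ * x by positivity), abs_div,
    abs_of_pos (show 0 < e * d ^ 2 by positivity)]
  refine mul_le_of_le_one_right (by positivity) (div_le_one_of_le₀ ?_ (by positivity))
  exact abs_le.mpr ⟨by linarith, by linarith⟩

end Bounds

theorem stmt_8_general (γ : ℝ) (hγ : 0 < γ) (h : ℕ) (hh : 1 ≤ h)
    (a : ℕ → ℝ)
    (ha : ∀ j : ℕ, 1 ≤ j → a j = 1 / (1 + 4 * γ * ((j : ℝ) - 1)))
    (Adj : Matrix (Fin (h + 1)) (Fin (h + 1)) ℝ)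
    (hAdj : ∀ i j, Adj i j = if i = j then 0 else 1)
    (M : Matrix (Fin (h + 1)) (Fin (h + 1)) ℝ)
    (hM : M = (-(((h : ℝ) - 1) * (a (h - 1) - a h))) • Adj
      + (4 * γ * (a h) ^ 2) • (Adj * Adj)) :
    ∀ μ ∈ spectrum ℝ M, |μ| ≤ 4 * γ * h := by
  set f : ℝ[X] := C (-(((h : ℝ) - 1) * (a (h - 1) - a h))) * X + C (4 * γ * (a h) ^ 2) * X ^ 2
  have hAdj_top : Adj = (⊤ : SimpleGraph (Fin (h + 1))).adjMatrix ℝ := by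
    ext i j; simp [hAdj]
  have hMf : M = aeval Adj f := by
    simp [hM, f, Algebra.smul_def, sq]
  intro μ hμ
  rw [hMf, hAdj_top] at hμ
  have hμf := spectrum.aeval_subset_pair_of_mul_sub_eq_zero
    SimpleGraph.adjMatrix_top_sub_algebraMap_mul_sub_algebraMap f hμ
  simp only [f, eval_add, eval_mul, eval_C, eval_X, eval_pow, Fintype.card_fin] at hμf
  obtain rfl | hh2 := hh.eq_or_lt
  · have ha1 : a 1 = 1 := by simp [ha 1 le_rfl]
    rcases hμf with rfl | rfl <;> norm_num [ha1, abs_of_pos hγ]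
  · have hx : (2 : ℝ) ≤ h := by exact_mod_cast hh2
    have hs : a (h - 1) = 1 / (1 + 4 * γ * ((h : ℝ) - 2)) := by
      rw [ha _ (by omega), Nat.cast_sub hh]; ring_nf
    rcases hμf with rfl | rfl
    · convert abs_eigenvalue_of_neg_one_le hγ hx hs (ha h hh) using 2; ring
    · convert abs_eigenvalue_of_degree_le hγ hx hs (ha h hh) using 2; push_cast; ring

theorem stmt_8 (γ : ℝ) (hγ : 0 < γ) (h : ℕ) (hh : 1 ≤ h)
    (a : ℕ → ℝ) (ha0 : a 0 = 0)
    (ha : ∀ j : ℕ, 1 ≤ j → a j = 1 / (1 + 4 * γ * ((j : ℝ) - 1)))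
    (Adj : Matrix (Fin (h + 1)) (Fin (h + 1)) ℝ)
    (hAdj : ∀ i j, Adj i j = if i = j then 0 else 1)
    (M : Matrix (Fin (h + 1)) (Fin (h + 1)) ℝ)
    (hM : M = (-(((h : ℝ) - 1) * (a (h - 1) - a h))) • Adj
      + (4 * γ * (a h) ^ 2) • (Adj * Adj)) :
    ∀ μ ∈ spectrum ℝ M, |μ| ≤ 4 * γ * h :=
  stmt_8_general γ hγ h hh a ha Adj hAdj M hM
end

section
/- Let C₁, C₂ be positive real constants, let H ≥ 1 be an integer, and let p be a real number with p > 0 and p ≥ 2·√( 2·C₁·(log H)·( √(1 + 4·C₂²·(log H)²) + 2·C₂·log H ) ). Then there exist real numbers b'₁, …, b'_H such that: (i) b'₁ = 1/p²; (ii) for every integer h with 2 ≤ h ≤ H, (h−1)·(b'_h − b'_{h−1}) ≥ C₁·(b'_h)² + C₂/p²; and (iii) for every 1 ≤ h ≤ H, b'_h ≤ (1/p²)·( 1 + (4·C₂ + 8·C₁/p²)·log H ). -/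
/-!
Take `b'_h = (1 + K log h) / p²` with `K = 4 C₂ + 8 C₁ / p²`. Since `(h - 1) log (h / (h - 1))`
is at least `1/2` for `h ≥ 2`, each increment `(h - 1)(b'_h - b'_{h-1})` is at least `K / (2p²)`,
so the recurrence reduces to the single inequality `C₁ (1 + K log H)² ≤ C₂ p² + 4 C₁`. With
`t = 2 C₂ log H` and `S = √(1 + t²)`, the lower bound on `p` reads `p² ≥ 8 C₁ log H (S + t)`; as
`(S + t)(S - t) = 1`, it gives `K log H ≤ S + t`, and the inequality becomes an elementary one
in `t`.
-/

open Real

lemma inv_le_log_sub_log_sub_one {x : ℝ} (hx : 1 < x) : x⁻¹ ≤ log x - log (x - 1) := by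
  have hx₀ : 0 < x - 1 := by linarith
  have h := one_sub_inv_le_log_of_pos (div_pos (by linarith) hx₀)
  rwa [log_div (by linarith) hx₀.ne', inv_div, one_sub_div (by linarith), sub_sub_cancel,
    one_div] at h

lemma one_half_le_mul_log_sub_log_sub_one {x : ℝ} (hx : 2 ≤ x) :
    1 / 2 ≤ (x - 1) * (log x - log (x - 1)) :=
  calc 1 / 2 ≤ (x - 1) * x⁻¹ := by
        rw [← div_eq_mul_inv, le_div_iff₀ (by linarith)]; linarith
    _ ≤ _ := mul_le_mul_of_nonneg_left (inv_le_log_sub_log_sub_one (by linarith)) (by linarith)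

lemma sq_one_add_sqrt_one_add_sq_add_le {t : ℝ} (ht : 0 ≤ t) :
    (1 + (√(1 + t ^ 2) + t)) ^ 2 ≤ 4 * t * (√(1 + t ^ 2) + t) + 4 := by
  set S := √(1 + t ^ 2)
  have hS : S ^ 2 = 1 + t ^ 2 := sq_sqrt (by positivity)
  have hS₀ : 0 ≤ S := sqrt_nonneg _
  have hS_le : S ≤ 1 + t ^ 2 / 2 := by nlinarith [sq_nonneg (1 + t ^ 2 / 2 - S)]
  rcases le_total t 1 with h | h
  · nlinarith [mul_nonneg (sub_nonneg.2 hS_le) (sub_nonneg.2 h)]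
  · nlinarith [mul_nonneg hS₀ (sub_nonneg.2 h)]

lemma mul_sq_one_add_mul_le_of_threshold_le {C₁ C₂ L q : ℝ} (hC₁ : 0 ≤ C₁) (hC₂ : 0 ≤ C₂)
    (hL : 0 ≤ L) (hq : 0 < q) (hqge : 8 * C₁ * L * (√(1 + (2 * C₂ * L) ^ 2) + 2 * C₂ * L) ≤ q) :
    C₁ * (1 + (4 * C₂ + 8 * C₁ / q) * L) ^ 2 ≤ C₂ * q + 4 * C₁ := by
  set t := 2 * C₂ * L
  set S := √(1 + t ^ 2)
  have ht : 0 ≤ t := by positivity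
  have hS : S ^ 2 = 1 + t ^ 2 := sq_sqrt (by positivity)
  have hSt : t ≤ S := by nlinarith [sqrt_nonneg (1 + t ^ 2)]
  have hdiv : 8 * C₁ * L / q ≤ S - t := by
    have hprod : (S - t) * (S + t) = 1 := by linear_combination hS
    rw [div_le_iff₀ hq]
    calc 8 * C₁ * L = (S - t) * (8 * C₁ * L * (S + t)) := by
          linear_combination -8 * C₁ * L * hprod
      _ ≤ (S - t) * q := mul_le_mul_of_nonneg_left hqge (sub_nonneg.2 hSt)
  have hKL : (4 * C₂ + 8 * C₁ / q) * L ≤ S + t := by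
    rw [show (4 * C₂ + 8 * C₁ / q) * L = 2 * t + 8 * C₁ * L / q by ring]
    linarith
  calc C₁ * (1 + (4 * C₂ + 8 * C₁ / q) * L) ^ 2 ≤ C₁ * (1 + (S + t)) ^ 2 := by
        gcongr
    _ ≤ C₁ * (4 * t * (S + t) + 4) := by gcongr; exact sq_one_add_sqrt_one_add_sq_add_le ht
    _ = C₂ * (8 * C₁ * L * (S + t)) + 4 * C₁ := by ring
    _ ≤ C₂ * q + 4 * C₁ := by gcongr

noncomputable def logProfile (K q : ℝ) (n : ℕ) : ℝ := (1 + K * log n) / q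

lemma logProfile_monotone {K q : ℝ} (hK : 0 ≤ K) (hq : 0 ≤ q) : Monotone (logProfile K q) := by
  intro m n hmn
  have hlog : log m ≤ log n := by
    rcases m.eq_zero_or_pos with rfl | hm
    -- `log 0 = 0 = log 1`, so there is no exception at `0`
    · simpa using log_natCast_nonneg n
    · exact log_le_log (by positivity) (by exact_mod_cast hmn)
  unfold logProfile
  gcongr

lemma div_two_mul_le_mul_logProfile_sub {K q : ℝ} (hK : 0 ≤ K) (hq : 0 < q) {n : ℕ}
    (hn : 2 ≤ n) : K / (2 * q) ≤ ((n : ℝ) - 1) * (logProfile K q n - logProfile K q (n - 1)) := by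
  have hn' : (2 : ℝ) ≤ n := by exact_mod_cast hn
  have hstep := one_half_le_mul_log_sub_log_sub_one hn'
  rw [logProfile, logProfile, Nat.cast_pred (by omega)]
  calc K / (2 * q) = K / q * (1 / 2) := by field_simp
    _ ≤ K / q * (((n : ℝ) - 1) * (log n - log (n - 1))) := by gcongr
    _ = _ := by field_simp; ring

theorem stmt_9_general (C₁ C₂ : ℝ) (hC₁ : 0 < C₁) (hC₂ : 0 < C₂) (H : ℕ)
    (p : ℝ) (hp : 0 < p)
    (hpge : p ≥ 2 * Real.sqrt (2 * C₁ * Real.log H *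
      (Real.sqrt (1 + 4 * C₂ ^ 2 * (Real.log H) ^ 2) + 2 * C₂ * Real.log H))) :
    ∃ b' : ℕ → ℝ,
      b' 1 = 1 / p ^ 2 ∧
      (∀ h : ℕ, 2 ≤ h → h ≤ H →
        ((h : ℝ) - 1) * (b' h - b' (h - 1)) ≥ C₁ * (b' h) ^ 2 + C₂ / p ^ 2) ∧
      (∀ h : ℕ, 1 ≤ h → h ≤ H →
        b' h ≤ (1 / p ^ 2) * (1 + (4 * C₂ + 8 * C₁ / p ^ 2) * Real.log H)) := by
  set L := log H
  set K := 4 * C₂ + 8 * C₁ / p ^ 2 with hK_def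
  have hL : 0 ≤ L := log_natCast_nonneg H
  have hK : 0 ≤ K := by positivity
  have hq : 0 < p ^ 2 := by positivity
  have hpsq : 8 * C₁ * L * (√(1 + (2 * C₂ * L) ^ 2) + 2 * C₂ * L) ≤ p ^ 2 := by
    have := pow_le_pow_left₀ (by positivity) hpge 2
    rw [mul_pow, sq_sqrt (by positivity)] at this
    rw [show (2 * C₂ * L) ^ 2 = 4 * C₂ ^ 2 * L ^ 2 by ring]
    linarith
  have key := mul_sq_one_add_mul_le_of_threshold_le hC₁.le hC₂.le hL hq hpsq
  have hbound : ∀ h ≤ H, logProfile K (p ^ 2) h ≤ (1 / p ^ 2) * (1 + K * L) := fun h hh => by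
    rw [one_div_mul_eq_div]; exact logProfile_monotone hK hq.le hh
  refine ⟨logProfile K (p ^ 2), by simp [logProfile], fun h h2 hH => ?_, fun h _ hH => hbound h hH⟩
  have hb₀ : 0 ≤ logProfile K (p ^ 2) h := by unfold logProfile; positivity
  calc C₁ * logProfile K (p ^ 2) h ^ 2 + C₂ / p ^ 2
      ≤ C₁ * ((1 / p ^ 2) * (1 + K * L)) ^ 2 + C₂ / p ^ 2 := by gcongr; exact hbound h hH
    _ = (C₁ * (1 + K * L) ^ 2 + C₂ * p ^ 2) / (p ^ 2) ^ 2 := by field_simp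
    _ ≤ (C₂ * p ^ 2 + 4 * C₁ + C₂ * p ^ 2) / (p ^ 2) ^ 2 := by gcongr
    _ = K / (2 * p ^ 2) := by rw [hK_def]; field_simp; ring
    _ ≤ _ := div_two_mul_le_mul_logProfile_sub hK hq h2

theorem stmt_9 (C₁ C₂ : ℝ) (hC₁ : 0 < C₁) (hC₂ : 0 < C₂) (H : ℕ) (hH : 1 ≤ H)
    (p : ℝ) (hp : 0 < p)
    (hpge : p ≥ 2 * Real.sqrt (2 * C₁ * Real.log H *
      (Real.sqrt (1 + 4 * C₂ ^ 2 * (Real.log H) ^ 2) + 2 * C₂ * Real.log H))) :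
    ∃ b' : ℕ → ℝ,
      b' 1 = 1 / p ^ 2 ∧
      (∀ h : ℕ, 2 ≤ h → h ≤ H →
        ((h : ℝ) - 1) * (b' h - b' (h - 1)) ≥ C₁ * (b' h) ^ 2 + C₂ / p ^ 2) ∧
      (∀ h : ℕ, 1 ≤ h → h ≤ H →
        b' h ≤ (1 / p ^ 2) * (1 + (4 * C₂ + 8 * C₁ / p ^ 2) * Real.log H)) :=
  stmt_9_general C₁ C₂ hC₁ hC₂ H p hp hpge
end

section
/- Let C₁, C₂, C₃ be positive real constants, let α be a real number with 1/2 ≤ α ≤ 1, let H ≥ 1 be an integer, and set c = max{ √(8·C₁), √(2/C₃) } · √(1 + 2·C₂). If p is a real number with p ≥ c·H^α·(log H)² + 2·c, then there exist real numbers b₁, …, b_H such that: (i) b₁ = 1/p²; (ii) for every integer h with 2 ≤ h ≤ H, (h−1)·b_h − h·b_{h−1} ≥ C₁·b_h² + (C₂/p²)·h^{2α}; and (iii) b_h ≤ C₃ for every 1 ≤ h ≤ H. -/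
/-!
Take `b_h = h (1 + D S_h) / p²` with `S_h = ∑_{j=2}^h j^{2α} / (j (j-1))` and `D = 2 C₂ + 1/2`.
Then `(h-1) b_h - h b_{h-1} = D h^{2α} / p²` exactly, so (ii) reduces to
`C₁ b_h² ≤ (D - C₂) h^{2α} / p²`. Comparing `S_h` with the harmonic sum gives
`S_h ≤ 2 h^{2α-1} log h`, hence `b_h ≤ h^{2α} (1 + 2 D log H) / p²`, and both (ii) and (iii)
follow once `c H^α (1 + 2 D log H) ≤ (2 + 4 C₂) p`, which is what `p ≥ c (H^α log² H + 2)` gives.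
-/

open Real Finset

lemma sum_Icc_two_inv_le_log (n : ℕ) : ∑ j ∈ Icc 2 n, (j : ℝ)⁻¹ ≤ log n := by
  rcases Nat.eq_zero_or_pos n with rfl | hn
  · simp
  have h := harmonic_le_one_add_log n
  rw [harmonic_eq_sum_Icc, ← add_sum_Ioc_eq_sum_Icc hn] at h
  simpa [← Finset.Icc_add_one_left_eq_Ioc] using h

/-- Dividing `(n - 1) b n - n b (n - 1) = f n` by `n (n - 1)` makes it telescope in `b n / n`. -/
noncomputable def recurrenceSolution (A : ℝ) (f : ℕ → ℝ) (n : ℕ) : ℝ :=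
  n * (A + ∑ j ∈ Icc 2 n, f j / (j * (j - 1)))

lemma recurrenceSolution_one (A : ℝ) (f : ℕ → ℝ) : recurrenceSolution A f 1 = A := by
  simp [recurrenceSolution]

lemma recurrenceSolution_spec (A : ℝ) (f : ℕ → ℝ) {n : ℕ} (hn : 2 ≤ n) :
    ((n : ℝ) - 1) * recurrenceSolution A f n - n * recurrenceSolution A f (n - 1) = f n := by
  obtain ⟨m, rfl⟩ := Nat.exists_eq_add_of_le' hn
  have hm : (0 : ℝ) < m + 1 := by positivity
  simp only [recurrenceSolution, sum_Icc_succ_top (by omega : 2 ≤ m + 2)]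
  push_cast
  field_simp
  ring

lemma recurrenceSolution_nonneg {A : ℝ} {f : ℕ → ℝ} (hA : 0 ≤ A) (hf : ∀ j, 0 ≤ f j)
    (n : ℕ) : 0 ≤ recurrenceSolution A f n := by
  refine mul_nonneg n.cast_nonneg (add_nonneg hA (sum_nonneg fun j hj => div_nonneg (hf j) ?_))
  have : (1 : ℝ) ≤ j := by exact_mod_cast (by simp at hj; omega : 1 ≤ j)
  nlinarith

lemma sum_Icc_two_rpow_div_le {s : ℝ} (hs : 1 ≤ s) (n : ℕ) :
    ∑ j ∈ Icc 2 n, (j : ℝ) ^ s / (j * (j - 1)) ≤ 2 * n ^ (s - 1) * log n := by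
  calc ∑ j ∈ Icc 2 n, (j : ℝ) ^ s / (j * (j - 1))
      ≤ ∑ j ∈ Icc 2 n, 2 * (n : ℝ) ^ (s - 1) * (j : ℝ)⁻¹ := by
        refine sum_le_sum fun j hj => ?_
        obtain ⟨hj2, hjn⟩ := mem_Icc.mp hj
        have hj : (2 : ℝ) ≤ j := by exact_mod_cast hj2
        have hpow : (j : ℝ) ^ s = j ^ (s - 1) * j := by
          rw [rpow_sub_one (by positivity), div_mul_cancel₀ _ (by positivity)]
        have hmono : (j : ℝ) ^ (s - 1) ≤ n ^ (s - 1) :=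
          rpow_le_rpow (by positivity) (by exact_mod_cast hjn) (by linarith)
        rw [hpow, div_le_iff₀ (by nlinarith)]
        field_simp
        nlinarith [rpow_nonneg (Nat.cast_nonneg j) (s - 1)]
    _ = 2 * n ^ (s - 1) * ∑ j ∈ Icc 2 n, (j : ℝ)⁻¹ := by rw [mul_sum]
    _ ≤ 2 * n ^ (s - 1) * log n := by gcongr; exact sum_Icc_two_inv_le_log n

lemma recurrenceSolution_rpow_le {A a s : ℝ} (hA : 0 ≤ A) (ha : 0 ≤ a) (hs : 1 ≤ s) {n N : ℕ}
    (hn : 1 ≤ n) (hnN : n ≤ N) :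
    recurrenceSolution A (fun j => a * j ^ s) n ≤ n ^ s * (A + 2 * a * log N) := by
  have hn' : (1 : ℝ) ≤ n := by exact_mod_cast hn
  have hlogN : log n ≤ log N := log_le_log (by positivity) (by exact_mod_cast hnN)
  have hsum := mul_le_mul_of_nonneg_left (sum_Icc_two_rpow_div_le hs n) ha
  have hlog : 0 ≤ log n := log_nonneg hn'
  have hns : (n : ℝ) ≤ n ^ s := self_le_rpow_of_one_le hn' hs
  have hpow : (n : ℝ) * n ^ (s - 1) = n ^ s := by
    rw [rpow_sub_one (by positivity)]; field_simp
  simp only [recurrenceSolution, mul_div_assoc, ← mul_sum]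
  calc (n : ℝ) * (A + a * ∑ j ∈ Icc 2 n, (j : ℝ) ^ s / (j * (j - 1)))
      ≤ n * (A + a * (2 * n ^ (s - 1) * log n)) := by gcongr
    _ = n * A + 2 * a * log n * (n * n ^ (s - 1)) := by ring
    _ ≤ n ^ s * (A + 2 * a * log N) := by
      rw [hpow]
      nlinarith [mul_le_mul_of_nonneg_right hns hA,
        mul_le_mul_of_nonneg_left hlogN (mul_nonneg ha (rpow_nonneg n.cast_nonneg s))]

lemma exists_constraint_solution_of_le {C₁ C₂ C₃ α D p : ℝ} {H : ℕ} (hC₁ : 0 ≤ C₁)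
    (hα : 1 / 2 ≤ α) (hD : 0 ≤ D) (hp : 0 < p)
    (hA : C₁ * (H : ℝ) ^ (2 * α) * (1 + 2 * D * log H) ^ 2 ≤ (D - C₂) * p ^ 2)
    (hB : (H : ℝ) ^ (2 * α) * (1 + 2 * D * log H) ≤ C₃ * p ^ 2) :
    ∃ b : ℕ → ℝ,
      b 1 = 1 / p ^ 2 ∧
      (∀ h : ℕ, 2 ≤ h → h ≤ H →
        ((h : ℝ) - 1) * b h - (h : ℝ) * b (h - 1) ≥
          C₁ * (b h) ^ 2 + (C₂ / p ^ 2) * (h : ℝ) ^ (2 * α)) ∧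
      (∀ h : ℕ, 1 ≤ h → h ≤ H → b h ≤ C₃) := by
  set b := recurrenceSolution (1 / p ^ 2) (fun j => D / p ^ 2 * (j : ℝ) ^ (2 * α))
  set u := 1 / p ^ 2 + 2 * (D / p ^ 2) * log H
  have hp2 : 0 < p ^ 2 := by positivity
  have hu : u = (1 + 2 * D * log H) / p ^ 2 := by ring
  have hb : ∀ h : ℕ, 1 ≤ h → h ≤ H → b h ≤ (h : ℝ) ^ (2 * α) * u := fun h h1 hH =>
    recurrenceSolution_rpow_le (by positivity) (by positivity) (by linarith) h1 hH
  refine ⟨b, recurrenceSolution_one _ _, fun h h2 hH => ?_, fun h h1 hH => ?_⟩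
  · rw [recurrenceSolution_spec _ _ h2]
    set x := (h : ℝ) ^ (2 * α)
    have hxH : x ≤ (H : ℝ) ^ (2 * α) :=
      rpow_le_rpow (by positivity) (by exact_mod_cast hH) (by linarith)
    have hA' : C₁ * (H : ℝ) ^ (2 * α) * u ^ 2 ≤ (D - C₂) / p ^ 2 := by
      rw [hu, le_div_iff₀ hp2]
      calc C₁ * (H : ℝ) ^ (2 * α) * ((1 + 2 * D * log H) / p ^ 2) ^ 2 * p ^ 2
          = C₁ * (H : ℝ) ^ (2 * α) * (1 + 2 * D * log H) ^ 2 / p ^ 2 := by field_simp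
        _ ≤ D - C₂ := by rwa [div_le_iff₀ hp2]
    have hb0 : 0 ≤ b h := recurrenceSolution_nonneg (by positivity) (fun j => by positivity) h
    calc C₁ * b h ^ 2 + C₂ / p ^ 2 * x ≤ C₁ * (x * u) ^ 2 + C₂ / p ^ 2 * x := by
          gcongr; exact hb h (by omega) hH
      _ = x * (C₁ * x * u ^ 2) + C₂ / p ^ 2 * x := by ring
      _ ≤ x * ((D - C₂) / p ^ 2) + C₂ / p ^ 2 * x := by
        gcongr
        exact (by gcongr : C₁ * x * u ^ 2 ≤ C₁ * (H : ℝ) ^ (2 * α) * u ^ 2).trans hA'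
      _ = D / p ^ 2 * x := by ring
  · calc b h ≤ (h : ℝ) ^ (2 * α) * u := hb h h1 hH
      _ ≤ (H : ℝ) ^ (2 * α) * u := by gcongr
      _ ≤ C₃ := by rw [hu, mul_div_assoc', div_le_iff₀ hp2]; exact hB

lemma rpow_mul_one_add_mul_log_le {H : ℕ} (hH : 1 ≤ H) {α x : ℝ} (hα : α ≤ 1) (hx : 0 ≤ x) :
    (H : ℝ) ^ α * (1 + x * log H) ≤ (1 + x) * ((H : ℝ) ^ α * log H ^ 2 + 2) := by
  have hH' : (1 : ℝ) ≤ H := by exact_mod_cast hH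
  have hX : 0 ≤ (H : ℝ) ^ α := by positivity
  have hL0 : 0 ≤ log H := log_natCast_nonneg H
  rcases Nat.lt_or_ge H 3 with hH3 | hH3
  · have hH2 : (H : ℝ) ≤ 2 := by exact_mod_cast Nat.lt_succ_iff.mp hH3
    have hX2 : (H : ℝ) ^ α ≤ 2 := (rpow_le_self_of_one_le hH' hα).trans hH2
    have hL : log H ≤ 1 :=
      (log_le_log (by positivity) hH2).trans (by linarith [log_two_lt_d9])
    calc (H : ℝ) ^ α * (1 + x * log H) ≤ 2 * (1 + x) := by
          gcongr
          nlinarith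
      _ ≤ (1 + x) * ((H : ℝ) ^ α * log H ^ 2 + 2) := by
        nlinarith [mul_nonneg hX (sq_nonneg (log H))]
  · have hL : 1 ≤ log H := by
      calc (1 : ℝ) ≤ log 3 := by
            rw [le_log_iff_exp_le (by norm_num)]
            linarith [exp_one_lt_d9]
        _ ≤ log H := log_le_log (by norm_num) (by exact_mod_cast hH3)
    calc (H : ℝ) ^ α * (1 + x * log H) ≤ (H : ℝ) ^ α * ((1 + x) * log H ^ 2) := by
          gcongr
          nlinarith [mul_le_mul_of_nonneg_left (by nlinarith : log H ≤ log H ^ 2) hx]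
      _ ≤ (1 + x) * ((H : ℝ) ^ α * log H ^ 2 + 2) := by nlinarith

lemma mul_le_sq_max_sqrt_mul_sqrt {a b k : ℝ} (ha : 0 ≤ a) (hb : 0 ≤ b) (hk : 0 ≤ k) :
    a * k ≤ (max √a √b * √k) ^ 2 ∧ b * k ≤ (max √a √b * √k) ^ 2 := by
  rw [mul_pow, sq_sqrt hk]
  constructor <;> gcongr
  · calc a = √a ^ 2 := (sq_sqrt ha).symm
      _ ≤ max √a √b ^ 2 := by gcongr; exact le_max_left _ _
  · calc b = √b ^ 2 := (sq_sqrt hb).symm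
      _ ≤ max √a √b ^ 2 := by gcongr; exact le_max_right _ _

lemma constraint_bounds_of_le {C₁ C₃ K α c p : ℝ} {H : ℕ} (hH : 1 ≤ H) (hα : α ≤ 1)
    (hC₁ : 0 ≤ C₁) (hK : 1 / 2 ≤ K) (hc : 0 < c) (hc₁ : 8 * C₁ * K ≤ c ^ 2)
    (hc₃ : 2 * K ≤ C₃ * c ^ 2) (hp : c * ((H : ℝ) ^ α * log H ^ 2 + 2) ≤ p) :
    C₁ * (H : ℝ) ^ (2 * α) * (1 + (2 * K - 1) * log H) ^ 2 ≤ K / 2 * p ^ 2 ∧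
      (H : ℝ) ^ (2 * α) * (1 + (2 * K - 1) * log H) ≤ C₃ * p ^ 2 := by
  set X := (H : ℝ) ^ α
  set Y := X * (1 + (2 * K - 1) * log H)
  have hX2 : (H : ℝ) ^ (2 * α) = X ^ 2 := by
    rw [mul_comm, rpow_mul (by positivity), rpow_two]
  have hpX : c * X ≤ p := by
    have := rpow_mul_one_add_mul_log_le hH hα (le_refl 0)
    simp only [zero_mul, add_zero, mul_one, one_mul] at this
    exact (mul_le_mul_of_nonneg_left this hc.le).trans hp
  have hpY : c * Y ≤ 2 * K * p := by
    have : Y ≤ 2 * K * (X * log H ^ 2 + 2) := by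
      convert rpow_mul_one_add_mul_log_le hH hα (x := 2 * K - 1) (by linarith) using 1
      ring
    calc c * Y ≤ c * (2 * K * (X * log H ^ 2 + 2)) := by gcongr
      _ = 2 * K * (c * (X * log H ^ 2 + 2)) := by ring
      _ ≤ 2 * K * p := by gcongr
  have hcY : 0 ≤ c * Y := by
    have := log_natCast_nonneg H
    have : 0 ≤ 1 + (2 * K - 1) * log H := by nlinarith
    positivity
  rw [hX2]
  constructor
  · refine le_of_mul_le_mul_left ?_ (pow_pos hc 2)
    calc c ^ 2 * (C₁ * X ^ 2 * (1 + (2 * K - 1) * log H) ^ 2) = C₁ * (c * Y) ^ 2 := by ring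
      _ ≤ C₁ * (2 * K * p) ^ 2 := by gcongr
      _ = 8 * C₁ * K * (K / 2 * p ^ 2) := by ring
      _ ≤ c ^ 2 * (K / 2 * p ^ 2) := by gcongr
  · refine le_of_mul_le_mul_left ?_ (pow_pos hc 2)
    calc c ^ 2 * (X ^ 2 * (1 + (2 * K - 1) * log H)) = (c * X) * (c * Y) := by ring
      _ ≤ p * (2 * K * p) := by gcongr; exact (by positivity : 0 ≤ c * X).trans hpX
      _ = 2 * K * p ^ 2 := by ring
      _ ≤ C₃ * c ^ 2 * p ^ 2 := by gcongr
      _ = c ^ 2 * (C₃ * p ^ 2) := by ring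

theorem stmt_10 (C₁ C₂ C₃ : ℝ) (hC₁ : 0 < C₁) (hC₂ : 0 < C₂) (hC₃ : 0 < C₃)
    (α : ℝ) (hα₁ : 1 / 2 ≤ α) (hα₂ : α ≤ 1) (H : ℕ) (hH : 1 ≤ H)
    (c : ℝ) (hc : c = max (Real.sqrt (8 * C₁)) (Real.sqrt (2 / C₃)) * Real.sqrt (1 + 2 * C₂))
    (p : ℝ) (hp : p ≥ c * (H : ℝ) ^ α * (Real.log H) ^ 2 + 2 * c) :
    ∃ b : ℕ → ℝ,
      b 1 = 1 / p ^ 2 ∧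
      (∀ h : ℕ, 2 ≤ h → h ≤ H →
        ((h : ℝ) - 1) * b h - (h : ℝ) * b (h - 1) ≥
          C₁ * (b h) ^ 2 + (C₂ / p ^ 2) * (h : ℝ) ^ (2 * α)) ∧
      (∀ h : ℕ, 1 ≤ h → h ≤ H → b h ≤ C₃) := by
  set K := 1 + 2 * C₂
  obtain ⟨hc₁, hc₃⟩ := mul_le_sq_max_sqrt_mul_sqrt (by positivity : 0 ≤ 8 * C₁)
    (by positivity : 0 ≤ 2 / C₃) (by positivity : 0 ≤ K)
  rw [← hc, div_mul_eq_mul_div, div_le_iff₀ hC₃] at hc₃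
  rw [← hc] at hc₁
  have hc0 : 0 < c := by rw [hc]; positivity
  have hp' : c * ((H : ℝ) ^ α * log H ^ 2 + 2) ≤ p := by linarith
  have hp0 : 0 < p := lt_of_lt_of_le (by positivity) hp'
  obtain ⟨hA, hB⟩ := constraint_bounds_of_le hH hα₂ hC₁.le (by linarith) hc0 hc₁
    (by linarith : 2 * K ≤ C₃ * c ^ 2) hp'
  -- `D = 2 C₂ + 1/2` is chosen so that `D - C₂ = K / 2` and `1 + 2 D = 2 K`.
  refine exists_constraint_solution_of_le hC₁.le hα₁ (D := 2 * C₂ + 1 / 2) (by positivity) hp0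
    ?_ ?_
  · convert hA using 4 <;> ring
  · convert hB using 3; ring
end

section
/- Let G = (V,E) be a finite simple graph, let q and β be integers with β ≥ 2, and for each vertex v ∈ V let L_v ⊆ {1,…,q} be a color list with |L_v| > deg(v) + β, where deg(v) is the degree of v in G. Let Ω be the (finite) set of proper list colorings of (G, L), i.e., functions σ : V → {1,…,q} with σ(v) ∈ L_v for every v and σ(u) ≠ σ(v) for every edge {u,v} ∈ E. Then Ω is nonempty, and for every vertex u ∈ V and every color c ∈ L_u, the number N = |{σ ∈ Ω : σ(u) = c}| satisfies (1 − 1/β)^{deg(u)} · |Ω| ≤ |L_u| · N and (|L_u| − deg(u)) · N ≤ |Ω|. Equivalently, the marginal probability μ_u(c) = N/|Ω| of the uniform distribution μ on Ω satisfies (1 − 1/β)^{deg(u)} / |L_u| ≤ μ_u(c) ≤ 1/(|L_u| − deg(u)). -/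
open Finset

lemma recolor_aux {V : Type*} [DecidableEq V] {q : ℕ} (S T : Finset (V → Fin q)) (w : V)
    (c₀ : Fin q) (B : (V → Fin q) → Finset (Fin q)) (m : ℕ)
    (hval : ∀ σ ∈ S, σ w = c₀)
    (hB : ∀ σ ∈ S, m ≤ (B σ).card)
    (hmap : ∀ σ ∈ S, ∀ c' ∈ B σ, Function.update σ w c' ∈ T) :
    m * S.card ≤ T.card := by
  classical
  have hdisj : ∀ σ ∈ S, ∀ σ' ∈ S, σ ≠ σ' →
      Disjoint ((B σ).image (Function.update σ w)) ((B σ').image (Function.update σ' w)) := by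
    intro σ hσ σ' hσ' hne
    rw [Finset.disjoint_left]
    rintro τ hτ hτ'
    obtain ⟨a, _, ha⟩ := Finset.mem_image.mp hτ
    obtain ⟨b, _, hb⟩ := Finset.mem_image.mp hτ'
    apply hne
    funext v
    by_cases hv : v = w
    · rw [hv, hval σ hσ, hval σ' hσ']
    · have h1 := congrFun (ha.trans hb.symm) v
      rwa [Function.update_of_ne hv, Function.update_of_ne hv] at h1
  calc m * S.card = ∑ _σ ∈ S, m := by rw [Finset.sum_const, smul_eq_mul, mul_comm]
    _ ≤ ∑ σ ∈ S, ((B σ).image (Function.update σ w)).card := by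
        refine Finset.sum_le_sum fun σ hσ => ?_
        rw [Finset.card_image_of_injective _ (Function.update_injective σ w)]
        exact hB σ hσ
    _ = (S.biUnion (fun σ => (B σ).image (Function.update σ w))).card :=
        (Finset.card_biUnion hdisj).symm
    _ ≤ T.card := by
        apply Finset.card_le_card
        intro τ hτ
        obtain ⟨σ, hσ, hτ⟩ := Finset.mem_biUnion.mp hτ
        obtain ⟨a, haB, ha⟩ := Finset.mem_image.mp hτ
        exact ha ▸ hmap σ hσ a haB

lemma greedy_aux (V : Type*) [Fintype V] [DecidableEq V]
    (G : SimpleGraph V) [DecidableRel G.Adj] (q : ℕ) (L : V → Finset (Fin q))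
    (hL : ∀ v, G.degree v < (L v).card) :
    ∃ σ : V → Fin q, (∀ v, σ v ∈ L v) ∧ ∀ u v, G.Adj u v → σ u ≠ σ v := by
  classical
  suffices H : ∀ s : Finset V, ∃ σ : V → Fin q,
      (∀ v ∈ s, σ v ∈ L v) ∧ ∀ u v, u ∈ s → v ∈ s → G.Adj u v → σ u ≠ σ v by
    obtain ⟨σ, h1, h2⟩ := H Finset.univ
    exact ⟨σ, fun v => h1 v (mem_univ v), fun u v h => h2 u v (mem_univ u) (mem_univ v) h⟩
  intro s
  induction s using Finset.induction_on with
  | empty =>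
      have : Nonempty (V → Fin q) := by
        rcases isEmpty_or_nonempty V with h | h
        · exact ⟨fun v => isEmptyElim v⟩
        · obtain ⟨v⟩ := h
          obtain ⟨c, _⟩ := Finset.card_pos.mp ((Nat.zero_le _).trans_lt (hL v))
          exact ⟨fun _ => c⟩
      obtain ⟨σ⟩ := this
      exact ⟨σ, by simp, by simp⟩
  | @insert a s ha IH =>
      obtain ⟨σ, h1, h2⟩ := IH
      set X := (s.filter (G.Adj a ·)).image σ with hX
      have hcard : X.card < (L a).card := by
        calc X.card ≤ (s.filter (G.Adj a ·)).card := Finset.card_image_le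
          _ ≤ (G.neighborFinset a).card := by
              apply Finset.card_le_card
              intro v hv
              rw [SimpleGraph.mem_neighborFinset]
              exact (Finset.mem_filter.mp hv).2
          _ = G.degree a := G.card_neighborFinset_eq_degree a
          _ < (L a).card := hL a
      have hne : (L a \ X).Nonempty := by
        rw [Finset.sdiff_nonempty]
        intro hsub
        exact absurd (Finset.card_le_card hsub) (not_le.mpr hcard)
      obtain ⟨c₀, hc₀⟩ := hne
      rw [Finset.mem_sdiff] at hc₀
      refine ⟨Function.update σ a c₀, ?_, ?_⟩
      · intro v hv
        rcases Finset.mem_insert.mp hv with rfl | hv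
        · rw [Function.update_self]; exact hc₀.1
        · rw [Function.update_of_ne (fun h : _ = a => ha (h ▸ hv))]
          exact h1 v hv
      · intro u v hu hv hadj
        have key : ∀ w ∈ s, G.Adj a w → c₀ ≠ σ w := by
          intro w hw hadjw h
          exact hc₀.2 (h ▸ Finset.mem_image_of_mem σ (Finset.mem_filter.mpr ⟨hw, hadjw⟩))
        rcases Finset.mem_insert.mp hu with hu' | hu' <;>
          rcases Finset.mem_insert.mp hv with hv' | hv'
        · exact absurd (hu' ▸ hv' ▸ hadj) (G.irrefl)
        · rw [hu', Function.update_self,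
            Function.update_of_ne (fun h : v = a => ha (h ▸ hv'))]
          exact key v hv' (hu' ▸ hadj)
        · rw [hv', Function.update_self,
            Function.update_of_ne (fun h : u = a => ha (h ▸ hu'))]
          exact fun h => key u hu' (hv' ▸ hadj).symm h.symm
        · rw [Function.update_of_ne (fun h : u = a => ha (h ▸ hu')),
            Function.update_of_ne (fun h : v = a => ha (h ▸ hv'))]
          exact h2 u v hu' hv' hadj

theorem stmt_11 (V : Type*) [Fintype V] [DecidableEq V]
    (G : SimpleGraph V) [DecidableRel G.Adj] (q β : ℕ) (hβ : 2 ≤ β)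
    (L : V → Finset (Fin q))
    (hL : ∀ v : V, G.degree v + β < (L v).card)
    (Ω : Finset (V → Fin q))
    (hΩ : Ω = Finset.univ.filter
      (fun σ : V → Fin q => (∀ v, σ v ∈ L v) ∧ ∀ u v, G.Adj u v → σ u ≠ σ v)) :
    Ω.Nonempty ∧
      ∀ u : V, ∀ c ∈ L u,
        (1 - 1 / (β : ℝ)) ^ G.degree u * (Ω.card : ℝ) ≤
            ((L u).card : ℝ) * ((Ω.filter fun σ => σ u = c).card : ℝ) ∧
          (((L u).card : ℝ) - (G.degree u : ℝ)) * ((Ω.filter fun σ => σ u = c).card : ℝ) ≤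
            (Ω.card : ℝ) := by
  classical
  have hdeg : ∀ v, G.degree v < (L v).card :=
    fun v => lt_of_le_of_lt (Nat.le_add_right _ _) (hL v)
  have hmem : ∀ σ : V → Fin q, σ ∈ Ω ↔
      ((∀ v, σ v ∈ L v) ∧ ∀ a b, G.Adj a b → σ a ≠ σ b) := by
    intro σ; rw [hΩ, Finset.mem_filter]; simp
  constructor
  · obtain ⟨σ₀, h1, h2⟩ := greedy_aux V G q L hdeg
    exact ⟨σ₀, (hmem σ₀).mpr ⟨h1, h2⟩⟩
  intro u c hc
  set Φ : Finset (V → Fin q) := Finset.univ.filter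
    (fun σ : V → Fin q => σ u = c ∧ (∀ v, v ≠ u → σ v ∈ L v) ∧
      ∀ v w, G.Adj v w → v ≠ u → w ≠ u → σ v ≠ σ w) with hΦdef
  have hΦmem : ∀ σ : V → Fin q, σ ∈ Φ ↔
      (σ u = c ∧ (∀ v, v ≠ u → σ v ∈ L v) ∧
        ∀ v w, G.Adj v w → v ≠ u → w ≠ u → σ v ≠ σ w) := by
    intro σ; rw [hΦdef, Finset.mem_filter]; simp
  -- the N set as a filter of Φ
  have hNset : Ω.filter (fun σ => σ u = c)
      = Φ.filter (fun σ => ∀ w ∈ G.neighborFinset u, σ w ≠ c) := by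
    ext σ
    rw [Finset.mem_filter, Finset.mem_filter, hmem, hΦmem]
    constructor
    · rintro ⟨⟨hlist, hprop⟩, huc⟩
      refine ⟨⟨huc, fun v _ => hlist v, fun v w hadj _ _ => hprop v w hadj⟩, ?_⟩
      intro w hw
      rw [SimpleGraph.mem_neighborFinset] at hw
      exact fun h => hprop u w hw (huc.trans h.symm)
    · rintro ⟨⟨huc, hlist, hprop⟩, hnbr⟩
      refine ⟨⟨?_, ?_⟩, huc⟩
      · intro v
        by_cases hv : v = u
        · rw [hv, huc]; exact hc
        · exact hlist v hv
      · intro a b hadj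
        by_cases hau : a = u
        · rw [hau] at hadj ⊢
          have hbu : b ≠ u := fun h => G.irrefl (h ▸ hadj)
          rw [huc]
          exact fun h => hnbr b ((SimpleGraph.mem_neighborFinset G u b).mpr hadj) h.symm
        · by_cases hbu : b = u
          · rw [hbu] at hadj ⊢
            rw [huc]
            exact hnbr a ((SimpleGraph.mem_neighborFinset G u a).mpr hadj.symm)
          · exact hprop a b hadj hau hbu
  -- upper bound (in ℕ)
  have hupper : ((L u).card - G.degree u) * (Ω.filter (fun σ => σ u = c)).card ≤ Ω.card := by
    apply recolor_aux (Ω.filter (fun σ => σ u = c)) Ω u c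
      (fun σ => L u \ ((G.neighborFinset u).image σ))
    · intro σ hσ; exact (Finset.mem_filter.mp hσ).2
    · intro σ _
      calc (L u).card - G.degree u
          ≤ (L u).card - ((G.neighborFinset u).image σ).card := by
            apply Nat.sub_le_sub_left
            calc ((G.neighborFinset u).image σ).card ≤ (G.neighborFinset u).card :=
                  Finset.card_image_le
              _ = G.degree u := G.card_neighborFinset_eq_degree u
        _ ≤ (L u \ ((G.neighborFinset u).image σ)).card := Finset.le_card_sdiff _ _
    · intro σ hσ c' hc'
      rw [Finset.mem_sdiff] at hc'
      have hσΩ := (hmem σ).mp (Finset.mem_filter.mp hσ).1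
      rw [hmem]
      constructor
      · intro v
        by_cases hv : v = u
        · rw [hv, Function.update_self]; exact hc'.1
        · rw [Function.update_of_ne hv]; exact hσΩ.1 v
      · intro a b hadj
        have key : ∀ w, G.Adj u w → c' ≠ σ w := by
          intro w hw h
          exact hc'.2 (h ▸ Finset.mem_image_of_mem σ
            ((SimpleGraph.mem_neighborFinset G u w).mpr hw))
        by_cases hau : a = u
        · rw [hau] at hadj ⊢
          have hbu : b ≠ u := fun h => G.irrefl (h ▸ hadj)
          rw [Function.update_self, Function.update_of_ne hbu]
          exact key b hadj
        · by_cases hbu : b = u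
          · rw [hbu] at hadj ⊢
            rw [Function.update_self, Function.update_of_ne hau]
            exact fun h => key a hadj.symm h.symm
          · rw [Function.update_of_ne hau, Function.update_of_ne hbu]
            exact hσΩ.2 a b hadj
  -- lower bound core induction (in ℕ)
  have hmain : ∀ S : Finset V, S ⊆ G.neighborFinset u →
      (β - 1) ^ S.card * Φ.card ≤ β ^ S.card *
        (Φ.filter (fun σ => ∀ w ∈ S, σ w ≠ c)).card := by
    intro S
    induction S using Finset.induction_on with
    | empty =>
        intro _
        have heq : Φ.filter (fun σ => ∀ w ∈ (∅ : Finset V), σ w ≠ c) = Φ :=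
          Finset.filter_true_of_mem (fun σ _ => by simp)
        rw [heq, Finset.card_empty, pow_zero, pow_zero]
    | @insert w S hw IH =>
        intro hsub
        have hwnb : G.Adj u w := by
          have := hsub (Finset.mem_insert_self w S)
          rwa [SimpleGraph.mem_neighborFinset] at this
        have hwu : w ≠ u := fun h => G.irrefl (h ▸ hwnb)
        have hS : S ⊆ G.neighborFinset u := fun x hx => hsub (Finset.mem_insert_of_mem hx)
        set A := Φ.filter (fun σ => ∀ v ∈ S, σ v ≠ c) with hA
        have hkey : β * (A.filter (fun σ => σ w = c)).card ≤
            (A.filter (fun σ => ¬ σ w = c)).card := by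
          apply recolor_aux _ _ w c
            (fun σ => L w \ insert c ((G.neighborFinset w).image σ))
          · intro σ hσ; exact (Finset.mem_filter.mp hσ).2
          · intro σ _
            have h1 : (insert c ((G.neighborFinset w).image σ)).card ≤ G.degree w + 1 := by
              calc (insert c ((G.neighborFinset w).image σ)).card
                  ≤ ((G.neighborFinset w).image σ).card + 1 := Finset.card_insert_le _ _
                _ ≤ (G.neighborFinset w).card + 1 :=
                    Nat.add_le_add_right Finset.card_image_le 1
                _ = G.degree w + 1 := by rw [G.card_neighborFinset_eq_degree w]
            have h2 : G.degree w + β < (L w).card := hL w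
            have h3 := Finset.le_card_sdiff (insert c ((G.neighborFinset w).image σ)) (L w)
            clear * - h1 h2 h3 hβ
            omega
          · intro σ hσ c' hc'
            rw [Finset.mem_sdiff, Finset.mem_insert] at hc'
            push_neg at hc'
            obtain ⟨hσA, hσwc⟩ := Finset.mem_filter.mp hσ
            obtain ⟨hσΦ, hσS⟩ := Finset.mem_filter.mp hσA
            obtain ⟨hσu, hσlist, hσprop⟩ := (hΦmem σ).mp hσΦ
            have key : ∀ x, G.Adj w x → c' ≠ σ x := by
              intro x hx h
              exact hc'.2.2 (h ▸ Finset.mem_image_of_mem σ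
                ((SimpleGraph.mem_neighborFinset G w x).mpr hx))
            rw [Finset.mem_filter]
            constructor
            · rw [Finset.mem_filter]
              constructor
              · rw [hΦmem]
                refine ⟨?_, ?_, ?_⟩
                · rw [Function.update_of_ne (Ne.symm hwu)]; exact hσu
                · intro v hv
                  by_cases hvw : v = w
                  · rw [hvw, Function.update_self]; exact hc'.1
                  · rw [Function.update_of_ne hvw]; exact hσlist v hv
                · intro a b hadj hau hbu
                  by_cases haw : a = w
                  · rw [haw] at hadj ⊢
                    have hbw : b ≠ w := fun h => G.irrefl (h ▸ hadj)
                    rw [Function.update_self, Function.update_of_ne hbw]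
                    exact key b hadj
                  · by_cases hbw : b = w
                    · rw [hbw] at hadj ⊢
                      rw [Function.update_self, Function.update_of_ne haw]
                      exact fun h => key a hadj.symm h.symm
                    · rw [Function.update_of_ne haw, Function.update_of_ne hbw]
                      exact hσprop a b hadj hau hbu
              · intro v hv
                rw [Function.update_of_ne (fun h : v = w => hw (h ▸ hv))]
                exact hσS v hv
            · rw [Function.update_self]
              exact hc'.2.1
        have hsplit := Finset.card_filter_add_card_filter_not
          (s := A) (p := fun σ => σ w = c)
        -- set identity: filtering by the insert condition
        have hgood : A.filter (fun σ => ¬ σ w = c)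
            = Φ.filter (fun σ => ∀ v ∈ insert w S, σ v ≠ c) := by
          rw [hA, Finset.filter_filter]
          apply Finset.filter_congr
          intro σ _
          simp only [Finset.forall_mem_insert]
          tauto
        have hcardins : (insert w S).card = S.card + 1 := Finset.card_insert_of_notMem hw
        rw [hcardins, ← hgood]
        set bc := (A.filter (fun σ => σ w = c)).card
        set gc := (A.filter (fun σ => ¬ σ w = c)).card
        have hA1 : (β - 1) * A.card ≤ β * gc := by
          have h1 : (β - 1) * bc ≤ gc :=
            le_trans (Nat.mul_le_mul_right bc (Nat.sub_le β 1)) hkey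
          have h2 : A.card = bc + gc := hsplit.symm
          rw [h2]
          have : (β - 1) * (bc + gc) = (β - 1) * bc + (β - 1) * gc := by ring
          rw [this]
          have hb : β = 1 + (β - 1) := by clear * - hβ; omega
          calc (β - 1) * bc + (β - 1) * gc ≤ gc + (β - 1) * gc := by
                exact Nat.add_le_add_right h1 _
            _ = (1 + (β - 1)) * gc := by ring
            _ = β * gc := by rw [← hb]
        calc (β - 1) ^ (S.card + 1) * Φ.card
            = (β - 1) * ((β - 1) ^ S.card * Φ.card) := by ring
          _ ≤ (β - 1) * (β ^ S.card * A.card) :=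
              Nat.mul_le_mul_left _ (IH hS)
          _ = β ^ S.card * ((β - 1) * A.card) := by ring
          _ ≤ β ^ S.card * (β * gc) := Nat.mul_le_mul_left _ hA1
          _ = β ^ (S.card + 1) * gc := by ring
  -- Ω injects into (L u) ×ˢ Φ
  have hΩΦ : Ω.card ≤ (L u).card * Φ.card := by
    set f : (V → Fin q) → Fin q × (V → Fin q) := fun σ => (σ u, Function.update σ u c)
      with hfdef
    have hinj : Set.InjOn f Ω := by
      intro σ hσ σ' hσ' hf
      have h1 : σ u = σ' u := congrArg Prod.fst hf
      have h2 : Function.update σ u c = Function.update σ' u c := congrArg Prod.snd hf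
      funext v
      by_cases hv : v = u
      · rw [hv]; exact h1
      · have := congrFun h2 v
        rwa [Function.update_of_ne hv, Function.update_of_ne hv] at this
    have himg : Ω.image f ⊆ (L u) ×ˢ Φ := by
      intro p hp
      obtain ⟨σ, hσ, rfl⟩ := Finset.mem_image.mp hp
      obtain ⟨hlist, hprop⟩ := (hmem σ).mp hσ
      rw [Finset.mem_product]
      simp only [hfdef]
      refine ⟨hlist u, (hΦmem _).mpr ⟨Function.update_self u c σ, ?_, ?_⟩⟩
      · intro v hv
        rw [Function.update_of_ne hv]; exact hlist v
      · intro a b hadj hau hbu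
        rw [Function.update_of_ne hau, Function.update_of_ne hbu]
        exact hprop a b hadj
    calc Ω.card = (Ω.image f).card := (Finset.card_image_of_injOn hinj).symm
      _ ≤ ((L u) ×ˢ Φ).card := Finset.card_le_card himg
      _ = (L u).card * Φ.card := Finset.card_product _ _
  -- conclude
  have hlow := hmain (G.neighborFinset u) (le_refl _)
  rw [G.card_neighborFinset_eq_degree u, ← hNset] at hlow
  constructor
  · -- lower bound in ℝ
    have hb0 : (0:ℝ) < (β:ℝ) := by exact_mod_cast Nat.lt_of_lt_of_le Nat.zero_lt_two hβ
    have h1 : (1 - 1/(β:ℝ)) = ((β - 1 : ℕ) : ℝ) / (β : ℝ) := by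
      rw [Nat.cast_sub (by clear * - hβ; omega : 1 ≤ β), Nat.cast_one]
      field_simp
    rw [h1, div_pow, div_mul_eq_mul_div, div_le_iff₀ (pow_pos hb0 _)]
    have c1 : ((β - 1 : ℕ) : ℝ) ^ G.degree u * (Φ.card : ℝ) ≤
        (β : ℝ) ^ G.degree u * ((Ω.filter fun σ => σ u = c).card : ℝ) := by
      exact_mod_cast hlow
    have c2 : (Ω.card : ℝ) ≤ ((L u).card : ℝ) * (Φ.card : ℝ) := by exact_mod_cast hΩΦ
    have hL0 : (0:ℝ) ≤ ((L u).card : ℝ) := Nat.cast_nonneg _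
    have hp0 : (0:ℝ) ≤ ((β - 1 : ℕ) : ℝ) ^ G.degree u := by positivity
    nlinarith [mul_le_mul_of_nonneg_left c1 hL0, mul_le_mul_of_nonneg_left c2 hp0]
  · -- upper bound in ℝ
    have hcast : ((L u).card : ℝ) - (G.degree u : ℝ) = (((L u).card - G.degree u : ℕ) : ℝ) := by
      rw [Nat.cast_sub (le_of_lt (hdeg u))]
    rw [hcast]
    exact_mod_cast hupper
end

section
/- For every integer n ≥ 2, the product ∏_{k=2}^{n} (k − 10/9)/(k − 1) is at least (8/9)·n^{−1/9}. -/
/-!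
For `0 ≤ a ≤ 1` the stronger bound `∏_{k=2}^n (k - 1 - a)/(k - 1) ≥ (1 - a)(n - 1)^(-a)` holds by
induction on `n`: the inductive step reduces to the weighted AM–GM inequality
`x^(1-a) (x-1)^a ≤ (1-a) x + a (x-1) = x - a`. Take `a = 1/9` and use `n^(-1/9) ≤ (n-1)^(-1/9)`.
-/

open Finset Real

lemma rpow_one_sub_mul_rpow_sub_one_le {x a : ℝ} (hx : 1 ≤ x) (ha₀ : 0 ≤ a) (ha₁ : a ≤ 1) :
    x ^ (1 - a) * (x - 1) ^ a ≤ x - a := by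
  have := geom_mean_le_arith_mean2_weighted (sub_nonneg.2 ha₁) ha₀ (by linarith : 0 ≤ x)
    (sub_nonneg.2 hx) (sub_add_cancel 1 a)
  linarith

lemma rpow_neg_le_rpow_neg_sub_one_mul {x a : ℝ} (hx : 1 < x) (ha₀ : 0 ≤ a) (ha₁ : a ≤ 1) :
    x ^ (-a) ≤ (x - 1) ^ (-a) * ((x - a) / x) := by
  have hx₀ : 0 < x := by linarith
  have hx₁ : 0 < x - 1 := by linarith
  have hxa : 0 < x ^ a := rpow_pos_of_pos hx₀ a
  have hx₁a : 0 < (x - 1) ^ a := rpow_pos_of_pos hx₁ a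
  have key := rpow_one_sub_mul_rpow_sub_one_le hx.le ha₀ ha₁
  rw [rpow_sub hx₀, rpow_one, div_mul_eq_mul_div, div_le_iff₀ hxa] at key
  rw [rpow_neg hx₀.le, rpow_neg hx₁.le, inv_mul_eq_div, div_div, inv_eq_one_div,
    div_le_div_iff₀ hxa (by positivity)]
  linarith

theorem one_sub_mul_rpow_neg_le_prod_Icc {a : ℝ} (ha₀ : 0 ≤ a) (ha₁ : a ≤ 1) {n : ℕ} (hn : 2 ≤ n) :
    (1 - a) * ((n : ℝ) - 1) ^ (-a) ≤ ∏ k ∈ Icc 2 n, (((k : ℝ) - (1 + a)) / ((k : ℝ) - 1)) := by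
  induction n, hn using Nat.le_induction with
  | base => norm_num; linarith
  | succ n hn ih =>
    have hn₁ : (1 : ℝ) < n := by exact_mod_cast hn
    rw [prod_Icc_succ_top (by omega)]
    push_cast
    rw [add_sub_cancel_right, show (n : ℝ) + 1 - (1 + a) = n - a by ring]
    calc (1 - a) * (n : ℝ) ^ (-a)
        ≤ (1 - a) * (((n : ℝ) - 1) ^ (-a) * ((n - a) / n)) :=
          mul_le_mul_of_nonneg_left (rpow_neg_le_rpow_neg_sub_one_mul hn₁ ha₀ ha₁)
            (sub_nonneg.2 ha₁)
      _ = (1 - a) * ((n : ℝ) - 1) ^ (-a) * ((n - a) / n) := by ring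
      _ ≤ _ := mul_le_mul_of_nonneg_right ih (div_nonneg (by linarith) (by linarith))

theorem stmt_13 (n : ℕ) (hn : 2 ≤ n) :
    (8 / 9 : ℝ) * (n : ℝ) ^ (-(1 : ℝ) / 9) ≤
      ∏ k ∈ Finset.Icc 2 n, (((k : ℝ) - 10 / 9) / ((k : ℝ) - 1)) := by
  have hn₁ : (1 : ℝ) < n := by exact_mod_cast hn
  calc (8 / 9 : ℝ) * (n : ℝ) ^ (-(1 : ℝ) / 9)
      ≤ (1 - 1 / 9) * ((n : ℝ) - 1) ^ (-(1 / 9 : ℝ)) := by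
        rw [neg_div]
        norm_num
        exact rpow_le_rpow_of_nonpos (by linarith) (by linarith) (by norm_num)
    _ ≤ ∏ k ∈ Icc 2 n, (((k : ℝ) - (1 + 1 / 9)) / ((k : ℝ) - 1)) :=
        one_sub_mul_rpow_neg_le_prod_Icc (by norm_num) (by norm_num) hn
    _ = _ := by norm_num
end
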